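/- arXiv:2411.14382 — 5 statements merged into one kernel-verified Lean document; each statement's English description precedes it below -/
import Mathlib

section
/- For every memory kernel M of class C² on [0,∞) and every real number λ, there exists a unique continuously differentiable function x : [0,∞) → ℝ satisfying x(0) = 1 and x'(t) + λ·x(t) + ∫₀ᵗ M(t−s)·x(s) ds = 0 for all t ≥ 0. -/
noncomputable section

/-- `MemSol M lam x x'` says `x` is a solution on `[0,∞)` of the memory ODE
`x'(t) + lam·x(t) + ∫₀ᵗ M(t−s)·x(s) ds = 0`, `x(0)=1`, with continuous
derivative `x'` on `[0,∞)` (i.e. `x` is continuously differentiable there). -/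
def MemSol (M : ℝ → ℝ) (lam : ℝ) (x x' : ℝ → ℝ) : Prop :=
  x 0 = 1 ∧ ContinuousOn x' (Set.Ici 0) ∧
    (∀ t ∈ Set.Ici (0 : ℝ), HasDerivWithinAt x (x' t) (Set.Ici 0) t) ∧
    (∀ t ∈ Set.Ici (0 : ℝ), x' t + lam * x t + ∫ s in (0:ℝ)..t, M (t - s) * x s = 0)

/-!
Writing `x' = -(λ x + K ⋆ x)` in integrated form turns the problem into the Volterra equation
`x t = 1 - ∫₀ᵗ (λ x s + ∫₀ˢ K (s - u) x u du) ds`, where `K` is any continuous extension of `M`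
to `ℝ`. On `[0, T]`, with `|K| ≤ C` there, the right-hand side is a `1/2`-contraction for the
weighted norm `sup |x t| e^{-L t}` as soon as `L ≥ 2 (|λ| + C) + 1`, since `∫₀ᵗ e^{L s} ds ≤ e^{L t} / L`.
This gives existence (Banach) and uniqueness on every `[0, T]`; the solutions on `[0, n]` glue to a
global one, and the fundamental theorem of calculus translates between the integral equation and
the differential one.
-/

open Set Real intervalIntegral

namespace MemoryODE

def rhs (K : ℝ → ℝ) (lam : ℝ) (x : ℝ → ℝ) (s : ℝ) : ℝ :=
  lam * x s + ∫ u in (0:ℝ)..s, K (s - u) * x u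

def integralOp (K : ℝ → ℝ) (lam : ℝ) (x : ℝ → ℝ) (t : ℝ) : ℝ :=
  1 - ∫ s in (0:ℝ)..t, rhs K lam x s

variable {K : ℝ → ℝ} {lam : ℝ} {x y : ℝ → ℝ}

theorem continuous_rhs (hK : Continuous K) (hx : Continuous x) : Continuous (rhs K lam x) :=
  (continuous_const.mul hx).add <|
    continuous_parametric_intervalIntegral_of_continuous (by fun_prop) continuous_id

theorem hasDerivAt_integralOp (hK : Continuous K) (hx : Continuous x) (t : ℝ) :
    HasDerivAt (integralOp K lam x) (-rhs K lam x t) t :=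
  ((continuous_rhs hK hx).integral_hasStrictDerivAt 0 t).hasDerivAt.const_sub 1

theorem continuous_integralOp (hK : Continuous K) (hx : Continuous x) :
    Continuous (integralOp K lam x) :=
  continuous_iff_continuousAt.2 fun t => (hasDerivAt_integralOp hK hx t).continuousAt

theorem rhs_sub (hK : Continuous K) (hx : Continuous x) (hy : Continuous y) (s : ℝ) :
    rhs K lam (x - y) s = rhs K lam x s - rhs K lam y s := by
  simp only [rhs, Pi.sub_apply, mul_sub]
  rw [integral_sub ((by fun_prop : Continuous fun u => K (s - u) * x u).intervalIntegrable _ _)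
    ((by fun_prop : Continuous fun u => K (s - u) * y u).intervalIntegrable _ _)]
  ring

theorem integralOp_sub (hK : Continuous K) (hx : Continuous x) (hy : Continuous y) (t : ℝ) :
    integralOp K lam x t - integralOp K lam y t = -∫ s in (0:ℝ)..t, rhs K lam (x - y) s := by
  simp only [integralOp, rhs_sub hK hx hy]
  rw [integral_sub ((continuous_rhs hK hx).intervalIntegrable _ _)
    ((continuous_rhs hK hy).intervalIntegrable _ _)]
  ring

theorem rhs_congr {s : ℝ} (hs : 0 ≤ s) (h : EqOn x y (Icc 0 s)) :
    rhs K lam x s = rhs K lam y s := by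
  rw [rhs, rhs, h ⟨hs, le_rfl⟩, integral_congr fun u hu => ?_]
  rw [uIcc_of_le hs] at hu
  simp only [h hu]

theorem integralOp_congr {t : ℝ} (ht : 0 ≤ t) (h : EqOn x y (Icc 0 t)) :
    integralOp K lam x t = integralOp K lam y t := by
  rw [integralOp, integralOp, integral_congr fun s hs => ?_]
  rw [uIcc_of_le ht] at hs
  exact rhs_congr hs.1 (h.mono (Icc_subset_Icc_right hs.2))

theorem integral_exp_mul {L : ℝ} (hL : L ≠ 0) (t : ℝ) :
    ∫ u in (0:ℝ)..t, exp (L * u) = (exp (L * t) - 1) / L := by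
  rw [integral_comp_mul_left (fun u => exp u) hL, integral_exp, mul_zero, exp_zero, smul_eq_mul,
    inv_mul_eq_div]

theorem abs_integral_le_of_abs_le_mul_exp {f : ℝ → ℝ} {t D L : ℝ} (ht : 0 ≤ t) (hL : 0 < L)
    (hf : ∀ u ∈ Icc 0 t, |f u| ≤ D * exp (L * u)) :
    |∫ u in (0:ℝ)..t, f u| ≤ D * exp (L * t) / L := by
  have hD : 0 ≤ D := by simpa using (abs_nonneg _).trans (hf 0 ⟨le_rfl, ht⟩)
  calc |∫ u in (0:ℝ)..t, f u| ≤ ∫ u in (0:ℝ)..t, D * exp (L * u) :=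
        norm_integral_le_of_norm_le (f := f) ht
          (MeasureTheory.ae_of_all _ fun u hu => hf u (Ioc_subset_Icc_self hu))
          ((by fun_prop : Continuous fun u => D * exp (L * u)).intervalIntegrable _ _)
    _ = D * ((exp (L * t) - 1) / L) := by rw [integral_const_mul, integral_exp_mul hL.ne']
    _ ≤ D * exp (L * t) / L := by
        rw [← mul_div_assoc]
        gcongr
        linarith

theorem abs_rhs_le {s C D L : ℝ} (hs : 0 ≤ s) (hL : 1 ≤ L) (hKC : ∀ r ∈ Icc 0 s, |K r| ≤ C)
    (hx : ∀ u ∈ Icc 0 s, |x u| ≤ D * exp (L * u)) :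
    |rhs K lam x s| ≤ (|lam| + C) * D * exp (L * s) := by
  have hC : 0 ≤ C := (abs_nonneg _).trans (hKC 0 ⟨le_rfl, hs⟩)
  have hmemory : |∫ u in (0:ℝ)..s, K (s - u) * x u| ≤ C * D * exp (L * s) / L := by
    refine abs_integral_le_of_abs_le_mul_exp hs (by linarith) fun u hu => ?_
    rw [abs_mul, mul_assoc]
    exact mul_le_mul (hKC _ ⟨by linarith [hu.2], by linarith [hu.1]⟩) (hx u hu) (abs_nonneg _) hC
  have hD : 0 ≤ C * D * exp (L * s) := by
    have : 0 ≤ D := by simpa using (abs_nonneg _).trans (hx 0 ⟨le_rfl, hs⟩)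
    positivity
  calc |rhs K lam x s| ≤ |lam| * |x s| + C * D * exp (L * s) / L := by
        rw [rhs, ← abs_mul]
        exact (abs_add_le _ _).trans (by gcongr)
    _ ≤ |lam| * (D * exp (L * s)) + C * D * exp (L * s) := by
        gcongr
        · exact hx s ⟨hs, le_rfl⟩
        · exact div_le_self hD hL
    _ = (|lam| + C) * D * exp (L * s) := by ring

theorem abs_integralOp_sub_le (hK : Continuous K) (hx : Continuous x) (hy : Continuous y)
    {t C D L : ℝ} (ht : 0 ≤ t) (hKC : ∀ r ∈ Icc 0 t, |K r| ≤ C) (hL : 1 ≤ L)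
    (hLC : 2 * (|lam| + C) ≤ L) (hxy : ∀ u ∈ Icc 0 t, |x u - y u| ≤ D * exp (L * u)) :
    |integralOp K lam x t - integralOp K lam y t| ≤ D * exp (L * t) / 2 := by
  have hD : 0 ≤ D := by simpa using (abs_nonneg _).trans (hxy 0 ⟨le_rfl, ht⟩)
  have hint := abs_integral_le_of_abs_le_mul_exp ht (by linarith) fun s hs =>
    abs_rhs_le (lam := lam) hs.1 hL (fun r hr => hKC r ⟨hr.1, hr.2.trans hs.2⟩)
      (x := x - y) fun u hu => hxy u ⟨hu.1, hu.2.trans hs.2⟩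
  rw [integralOp_sub hK hx hy, abs_neg]
  refine hint.trans ?_
  rw [div_le_div_iff₀ (by linarith) two_pos]
  have := exp_pos (L * t)
  nlinarith [mul_nonneg hD this.le]

theorem eqOn_Icc_of_eqOn_integralOp (hK : Continuous K) (hx : Continuous x) (hy : Continuous y)
    {T : ℝ} (hxT : EqOn x (integralOp K lam x) (Icc 0 T))
    (hyT : EqOn y (integralOp K lam y) (Icc 0 T)) : EqOn x y (Icc 0 T) := by
  intro t ht
  obtain ⟨C, hC⟩ := isCompact_Icc.exists_bound_of_continuousOn (s := Icc 0 T) hK.continuousOn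
  have hC0 : 0 ≤ C := (norm_nonneg _).trans (hC 0 ⟨le_rfl, ht.1.trans ht.2⟩)
  set L := 2 * (|lam| + C) + 1
  set g : ℝ → ℝ := fun u => |x u - y u| * exp (-(L * u))
  obtain ⟨u₀, hu₀, hmax⟩ := isCompact_Icc.exists_isMaxOn ⟨t, ht⟩
    (by fun_prop : Continuous g).continuousOn
  have hbound : ∀ u ∈ Icc 0 T, |x u - y u| ≤ g u₀ * exp (L * u) := fun u hu => by
    calc |x u - y u| = g u * exp (L * u) := by simp [g, mul_assoc, ← exp_add]
      _ ≤ g u₀ * exp (L * u) := by gcongr; exact hmax hu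
  -- `g u₀` is the weighted distance between `x` and `y`, which the contraction estimate halves.
  have hhalf : g u₀ ≤ g u₀ / 2 := by
    have h := abs_integralOp_sub_le hK hx hy hu₀.1
      (fun r hr => (hC r ⟨hr.1, hr.2.trans hu₀.2⟩)) (by linarith [abs_nonneg lam]) (by linarith)
      fun u hu => hbound u ⟨hu.1, hu.2.trans hu₀.2⟩
    rw [← hxT hu₀, ← hyT hu₀] at h
    calc g u₀ ≤ g u₀ * exp (L * u₀) / 2 * exp (-(L * u₀)) :=
          mul_le_mul_of_nonneg_right h (exp_pos _).le
      _ = g u₀ / 2 := by rw [mul_div_right_comm, mul_assoc, ← exp_add]; simp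
  have hg : g t ≤ 0 := (hmax ht).trans (by linarith)
  have := exp_pos (-(L * t))
  rw [← sub_eq_zero, ← abs_nonpos_iff]
  nlinarith [abs_nonneg (x t - y t)]

theorem exists_eqOn_integralOp_Icc (hK : Continuous K) {T : ℝ} (hT : 0 ≤ T) :
    ∃ x, Continuous x ∧ EqOn x (integralOp K lam x) (Icc 0 T) := by
  obtain ⟨C, hC⟩ := isCompact_Icc.exists_bound_of_continuousOn (s := Icc 0 T) hK.continuousOn
  have hC0 : 0 ≤ C := (norm_nonneg _).trans (hC 0 ⟨le_rfl, hT⟩)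
  set L := 2 * (|lam| + C) + 1
  -- `Φ` is `integralOp` conjugated by multiplication with `e^{L t}`, which turns the weighted
  -- norm into the sup norm of `C(Icc 0 T, ℝ)`.
  let weight : C(Icc (0:ℝ) T, ℝ) → ℝ → ℝ := fun f u => exp (L * u) * IccExtend hT f u
  have hweight : ∀ f, Continuous (weight f) := fun f =>
    (by fun_prop : Continuous fun u => exp (L * u)).mul f.continuous.Icc_extend'
  let Φ : C(Icc (0:ℝ) T, ℝ) → C(Icc (0:ℝ) T, ℝ) := fun f =>
    ContinuousMap.restrict (Icc 0 T)
      ⟨fun t => exp (-(L * t)) * integralOp K lam (weight f) t,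
        (by fun_prop : Continuous fun t => exp (-(L * t))).mul
          (continuous_integralOp hK (hweight f))⟩
  have hΦ : ContractingWith (1 / 2) Φ := by
    refine ⟨by norm_num, LipschitzWith.of_dist_le_mul fun f g => ?_⟩
    rw [ContinuousMap.dist_le (by positivity)]
    intro t
    have h := abs_integralOp_sub_le (lam := lam) (L := L) hK (hweight f) (hweight g) t.2.1
      (fun r hr => hC r ⟨hr.1, hr.2.trans t.2.2⟩) (by linarith [abs_nonneg lam]) (by linarith)
      (D := dist f g) fun u _ => by
        rw [← mul_sub, abs_mul, abs_of_pos (exp_pos _), mul_comm, ← dist_eq]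
        gcongr
        exact ContinuousMap.dist_apply_le_dist _
    calc dist (Φ f t) (Φ g t)
        = exp (-(L * t)) * |integralOp K lam (weight f) t - integralOp K lam (weight g) t| := by
          rw [dist_eq, ← abs_of_pos (exp_pos (-(L * t))), ← abs_mul, mul_sub]
          rfl
      _ ≤ exp (-(L * t)) * (dist f g * exp (L * t) / 2) := by gcongr
      _ = ((1 / 2 : NNReal) : ℝ) * dist f g := by
          rw [mul_div_assoc', mul_left_comm, ← exp_add]
          simp [div_eq_inv_mul]
  set f := ContractingWith.fixedPoint Φ hΦ
  refine ⟨weight f, hweight f, fun t ht => ?_⟩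
  have hfix : f ⟨t, ht⟩ = Φ f ⟨t, ht⟩ := by rw [hΦ.fixedPoint_isFixedPt]
  calc weight f t = exp (L * t) * f ⟨t, ht⟩ := by simp [weight, IccExtend_of_mem hT _ ht]
    _ = integralOp K lam (weight f) t := by
        rw [hfix]
        simp [Φ, ← mul_assoc, ← exp_add]

theorem exists_continuous_eqOn_Icc_of_compatible {X : ℕ → ℝ → ℝ} (hX : ∀ n, Continuous (X n))
    (hXX : ∀ m n, m ≤ n → EqOn (X m) (X n) (Icc 0 m)) :
    ∃ x : ℝ → ℝ, Continuous x ∧ ∀ n, EqOn x (X n) (Icc 0 n) := by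
  have hceil : ∀ (n : ℕ) (t : ℝ), t ≤ n → X ⌈t⌉₊ (max t 0) = X n (max t 0) := fun n t ht =>
    hXX _ _ (Nat.ceil_le.2 ht) ⟨le_max_right _ _, max_le (Nat.le_ceil t) (Nat.cast_nonneg _)⟩
  refine ⟨fun t => X ⌈t⌉₊ (max t 0), continuous_iff_continuousAt.2 fun t₀ => ?_,
    fun n t ht => ?_⟩
  · have hlt : t₀ < ((⌈t₀⌉₊ + 1 : ℕ) : ℝ) := by push_cast; linarith [Nat.le_ceil t₀]
    refine ((hX (⌈t₀⌉₊ + 1)).comp (by fun_prop : Continuous fun t : ℝ => max t 0)).continuousAt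
      |>.congr ?_
    filter_upwards [Iio_mem_nhds hlt] with t ht using (hceil _ t (le_of_lt ht)).symm
  · simpa [max_eq_left ht.1] using hceil n t ht.2

theorem exists_eqOn_integralOp (hK : Continuous K) :
    ∃ x, Continuous x ∧ EqOn x (integralOp K lam x) (Ici 0) := by
  choose X hX hXsol using fun n : ℕ => exists_eqOn_integralOp_Icc (lam := lam) hK n.cast_nonneg
  obtain ⟨x, hx, hxX⟩ := exists_continuous_eqOn_Icc_of_compatible hX fun m n hmn =>
    eqOn_Icc_of_eqOn_integralOp hK (hX m) (hX n) (hXsol m)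
      ((hXsol n).mono (Icc_subset_Icc_right (Nat.cast_le.2 hmn)))
  refine ⟨x, hx, fun t (ht : 0 ≤ t) => ?_⟩
  have htn : t ∈ Icc 0 (⌈t⌉₊ : ℝ) := ⟨ht, Nat.le_ceil t⟩
  rw [hxX _ htn, hXsol _ htn]
  exact integralOp_congr ht fun u hu => (hxX _ ⟨hu.1, hu.2.trans htn.2⟩).symm

theorem eqOn_Ici_of_eqOn_integralOp (hK : Continuous K) (hx : ContinuousOn x (Ici 0))
    (hy : ContinuousOn y (Ici 0)) (hxs : EqOn x (integralOp K lam x) (Ici 0))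
    (hys : EqOn y (integralOp K lam y) (Ici 0)) : EqOn x y (Ici 0) := by
  have extend : ∀ z : ℝ → ℝ, ContinuousOn z (Ici 0) → EqOn z (integralOp K lam z) (Ici 0) →
      Continuous (fun u => z (max u 0)) ∧
        ∀ T, EqOn (fun u => z (max u 0)) (integralOp K lam fun u => z (max u 0)) (Icc 0 T) := by
    intro z hz hzs
    refine ⟨hz.comp_continuous (by fun_prop) fun u => le_max_right u 0, fun T t ht => ?_⟩
    have hzt : EqOn z (fun u => z (max u 0)) (Icc 0 t) := fun u hu => by simp [max_eq_left hu.1]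
    simpa [max_eq_left ht.1, integralOp_congr ht.1 hzt] using hzs ht.1
  intro t (ht : 0 ≤ t)
  obtain ⟨hx', hxs'⟩ := extend x hx hxs
  obtain ⟨hy', hys'⟩ := extend y hy hys
  simpa [max_eq_left ht] using
    eqOn_Icc_of_eqOn_integralOp hK hx' hy' (hxs' t) (hys' t) ⟨ht, le_rfl⟩

theorem integral_kernel_congr {M : ℝ → ℝ} (hKM : EqOn K M (Ici 0)) {t : ℝ} (ht : 0 ≤ t) :
    ∫ s in (0:ℝ)..t, M (t - s) * x s = ∫ s in (0:ℝ)..t, K (t - s) * x s := by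
  refine integral_congr fun s hs => ?_
  rw [uIcc_of_le ht] at hs
  simp only [hKM (show 0 ≤ t - s by linarith [hs.2])]

theorem memSol_of_eqOn_integralOp {M : ℝ → ℝ} (hK : Continuous K) (hKM : EqOn K M (Ici 0))
    (hx : Continuous x) (hxs : EqOn x (integralOp K lam x) (Ici 0)) :
    MemSol M lam x fun t => -rhs K lam x t := by
  refine ⟨by simpa [integralOp] using hxs (mem_Ici.2 le_rfl),
    (continuous_rhs hK hx).neg.continuousOn, fun t ht => ?_, fun t ht => ?_⟩
  · exact (hasDerivAt_integralOp hK hx t).hasDerivWithinAt.congr hxs (hxs ht)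
  · simp only [integral_kernel_congr hKM ht, rhs]
    ring

theorem _root_.MemSol.continuousOn {M : ℝ → ℝ} {x' : ℝ → ℝ} (h : MemSol M lam x x') :
    ContinuousOn x (Ici 0) :=
  fun t ht => (h.2.2.1 t ht).continuousWithinAt

theorem _root_.MemSol.eqOn_integralOp {M : ℝ → ℝ} {x' : ℝ → ℝ} (hKM : EqOn K M (Ici 0))
    (h : MemSol M lam x x') : EqOn x (integralOp K lam x) (Ici 0) := by
  have hx := h.continuousOn
  obtain ⟨h0, hx', hderiv, heq⟩ := h
  intro t (ht : 0 ≤ t)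
  have hftc : ∫ s in (0:ℝ)..t, x' s = x t - x 0 :=
    integral_eq_sub_of_hasDeriv_right_of_le ht (hx.mono Icc_subset_Ici_self)
      (fun s hs => (hderiv s hs.1.le).mono (Ioi_subset_Ici hs.1.le))
      (hx'.mono (uIcc_of_le ht ▸ Icc_subset_Ici_self)).intervalIntegrable
  have hx'_eq : EqOn x' (fun s => -rhs K lam x s) (uIcc 0 t) := fun s hs => by
    rw [uIcc_of_le ht] at hs
    have := heq s hs.1
    rw [integral_kernel_congr hKM hs.1] at this
    simp only [rhs]
    linarith
  rw [integralOp, ← neg_add_eq_sub, ← integral_neg, ← integral_congr hx'_eq, hftc, h0]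
  ring

end MemoryODE

open MemoryODE in
/-- For every `C²` memory kernel `M` on `[0,∞)` and every `λ ∈ ℝ`, there exists a unique
continuously differentiable solution of the memory ODE with parameter `λ`. -/
theorem stmt0 (M : ℝ → ℝ) (hM : ContDiffOn ℝ 2 M (Set.Ici 0)) (lam : ℝ) :
    (∃ x x' : ℝ → ℝ, MemSol M lam x x') ∧
    (∀ x₁ x₁' x₂ x₂' : ℝ → ℝ, MemSol M lam x₁ x₁' → MemSol M lam x₂ x₂' →
      Set.EqOn x₁ x₂ (Set.Ici 0)) := by
  set K : ℝ → ℝ := fun r => M (max r 0)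
  have hK : Continuous K := hM.continuousOn.comp_continuous (by fun_prop) fun r => le_max_right r 0
  have hKM : EqOn K M (Ici 0) := fun r (hr : 0 ≤ r) => by simp [K, max_eq_left hr]
  refine ⟨?_, fun x₁ x₁' x₂ x₂' h₁ h₂ => ?_⟩
  · obtain ⟨x, hx, hxs⟩ := exists_eqOn_integralOp (lam := lam) hK
    exact ⟨x, _, memSol_of_eqOn_integralOp hK hKM hx hxs⟩
  · exact eqOn_Ici_of_eqOn_integralOp hK h₁.continuousOn h₂.continuousOn
      (h₁.eqOn_integralOp hKM) (h₂.eqOn_integralOp hKM)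
end
end

section
/- Let M be of class C² on [0,∞) and λ ∈ ℝ. Then the unique solution x of the memory ODE with parameter λ satisfies, for every t ≥ 0, x(t) = e^{−λt} + ∫₀ᵗ K_M(t,s)·e^{−λs} ds, where K_M(t,s) = Σ_{j≥1} (s^j/j!)·((−M)^{*j})(t−s) for 0 ≤ s ≤ t. -/
noncomputable section

/-- Convolution of two functions on `[0,∞)`: `(f*g)(t) = ∫₀ᵗ f(t−s)·g(s) ds`. -/
noncomputable def conv (f g : ℝ → ℝ) : ℝ → ℝ := fun t => ∫ s in (0:ℝ)..t, f (t - s) * g s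

/-- Convolution powers: `convPow f 1 = f`, `convPow f (j+1) = conv f (convPow f j)`.
(The value at `0` is junk and never used.) -/
noncomputable def convPow (f : ℝ → ℝ) : ℕ → ℝ → ℝ
  | 0 => fun _ => 0
  | 1 => f
  | (j+2) => conv f (convPow f (j+1))

/-- The kernel `K_M(t,s) = Σ_{j≥1} (s^j/j!)·((−M)^{*j})(t−s)`. -/
noncomputable def KM (M : ℝ → ℝ) (t s : ℝ) : ℝ :=
  ∑' j : ℕ, s ^ (j+1) / (Nat.factorial (j+1) : ℝ) * convPow (fun τ => -M τ) (j+1) (t - s)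

/-!
Variation of constants turns the memory equation into the Volterra equation
`x = E + (E * N) * x`, where `E(t) = e^{-λt}` and `N = -M`; its continuous solution is unique
by the iteration estimate `|z(t)| ≤ B (Ct)ⁿ/n!`. Since `E * (sᵏ/k! E) = sᵏ⁺¹/(k+1)! E`,
convolving with `E * N` sends `N^{*k} * (sᵏ/k! E)` to `N^{*(k+1)} * (sᵏ⁺¹/(k+1)! E)`, so
`E + Σ_{k≥1} N^{*k} * (sᵏ/k! E)` solves the same equation, and at time `t` this series is
`∫₀ᵗ K_M(t,s) e^{-λs} ds`. All series converge uniformly on compacts thanks to the bound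
`|N^{*k}(τ)| ≤ Cᵏ τᵏ⁻¹/(k-1)!`.
-/
open MeasureTheory Set Filter Topology Function
open scoped Nat

lemma conv_comm (f g : ℝ → ℝ) : conv f g = conv g f := by
  funext t
  have h := intervalIntegral.integral_comp_sub_left (fun u => g u * f (t - u)) t (a := 0) (b := t)
  simp only [sub_sub_cancel, sub_self, sub_zero] at h
  simp only [conv, mul_comm (f _), ← h]

lemma conv_congr {f f' g g' : ℝ → ℝ} {t : ℝ} (ht : 0 ≤ t) (hf : EqOn f f' (Icc 0 t))
    (hg : EqOn g g' (Icc 0 t)) : conv f g t = conv f' g' t := by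
  refine intervalIntegral.integral_congr fun s hs => ?_
  rw [uIcc_of_le ht] at hs
  simp only [hf ⟨sub_nonneg.2 hs.2, by linarith [hs.1]⟩, hg hs]

lemma conv_neg_left (f g : ℝ → ℝ) : conv (-f) g = -conv f g := by
  funext t
  simp [conv, intervalIntegral.integral_neg]

lemma intervalIntegrable_conv_integrand {f g : ℝ → ℝ} (hf : Continuous f) {t : ℝ} (ht : 0 ≤ t)
    (hg : ContinuousOn g (Icc 0 t)) :
    IntervalIntegrable (fun s => f (t - s) * g s) volume 0 t :=
  ((hf.comp (continuous_sub_left t)).continuousOn.mul (by rwa [uIcc_of_le ht])).intervalIntegrable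

lemma conv_add_right {f g₁ g₂ : ℝ → ℝ} (hf : Continuous f) {t : ℝ} (ht : 0 ≤ t)
    (hg₁ : ContinuousOn g₁ (Icc 0 t)) (hg₂ : ContinuousOn g₂ (Icc 0 t)) :
    conv f (fun τ => g₁ τ + g₂ τ) t = conv f g₁ t + conv f g₂ t := by
  simp only [conv, mul_add]
  exact intervalIntegral.integral_add (intervalIntegrable_conv_integrand hf ht hg₁)
    (intervalIntegrable_conv_integrand hf ht hg₂)

lemma conv_sub_right {f g₁ g₂ : ℝ → ℝ} (hf : Continuous f) {t : ℝ} (ht : 0 ≤ t)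
    (hg₁ : ContinuousOn g₁ (Icc 0 t)) (hg₂ : ContinuousOn g₂ (Icc 0 t)) :
    conv f (fun τ => g₁ τ - g₂ τ) t = conv f g₁ t - conv f g₂ t := by
  simp only [conv, mul_sub]
  exact intervalIntegral.integral_sub (intervalIntegrable_conv_integrand hf ht hg₁)
    (intervalIntegrable_conv_integrand hf ht hg₂)

lemma continuous_conv {f g : ℝ → ℝ} (hf : Continuous f) (hg : Continuous g) :
    Continuous (conv f g) :=
  intervalIntegral.continuous_parametric_intervalIntegral_of_continuous (μ := volume)
    (f := fun t s => f (t - s) * g s) (by fun_prop) continuous_id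

lemma intervalIntegral_triangle_swap {F : ℝ → ℝ → ℝ} (hF : Continuous (uncurry F)) {t : ℝ}
    (ht : 0 ≤ t) :
    ∫ s in (0:ℝ)..t, ∫ u in (0:ℝ)..s, F s u = ∫ u in (0:ℝ)..t, ∫ s in u..t, F s u := by
  set μ := volume.restrict (Ioc (0:ℝ) t)
  set G := indicator {p : ℝ × ℝ | p.2 ≤ p.1} (uncurry F)
  have hG : Integrable G (μ.prod μ) := by
    rw [Measure.prod_restrict]
    refine (IntegrableOn.mono_set ?_
      (Set.prod_mono Ioc_subset_Icc_self Ioc_subset_Icc_self)).indicator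
      (measurableSet_le measurable_snd measurable_fst)
    exact hF.continuousOn.integrableOn_compact (isCompact_Icc.prod isCompact_Icc)
  have hL : ∀ s ∈ Ioc (0:ℝ) t, ∫ u in (0:ℝ)..s, F s u = ∫ u, G (s, u) ∂μ := by
    intro s hs
    have : Ioc (0:ℝ) t ∩ Iic s = Ioc 0 s := by
      ext u; simp only [mem_inter_iff, mem_Ioc, mem_Iic]
      constructor
      · rintro ⟨⟨h0, -⟩, hs'⟩; exact ⟨h0, hs'⟩
      · rintro ⟨h0, hs'⟩; exact ⟨⟨h0, hs'.trans hs.2⟩, hs'⟩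
    rw [intervalIntegral.integral_of_le hs.1.le, ← this,
      ← setIntegral_indicator measurableSet_Iic]
    simp [G, μ, indicator_apply]
  have hR : ∀ u ∈ Ioc (0:ℝ) t, ∫ s in u..t, F s u = ∫ s, G (s, u) ∂μ := by
    intro u hu
    have : Ioc (0:ℝ) t ∩ Ici u = Icc u t := by
      ext s; simp only [mem_inter_iff, mem_Ioc, mem_Icc, mem_Ici]
      constructor
      · rintro ⟨⟨-, hst⟩, hus⟩; exact ⟨hus, hst⟩
      · rintro ⟨hus, hst⟩; exact ⟨⟨hu.1.trans_le hus, hst⟩, hus⟩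
    rw [intervalIntegral.integral_of_le hu.2, ← integral_Icc_eq_integral_Ioc, ← this,
      ← setIntegral_indicator measurableSet_Ici]
    simp [G, μ, indicator_apply]
  rw [intervalIntegral.integral_of_le ht, intervalIntegral.integral_of_le ht,
    setIntegral_congr_fun measurableSet_Ioc hL, setIntegral_congr_fun measurableSet_Ioc hR]
  exact integral_integral_swap hG

lemma conv_assoc {f g h : ℝ → ℝ} (hf : Continuous f) (hg : Continuous g) (hh : Continuous h)
    {t : ℝ} (ht : 0 ≤ t) : conv (conv f g) h t = conv f (conv g h) t := by
  have hinner : ∀ u, ∫ s in u..t, f (t - s) * (g (s - u) * h u) = conv f g (t - u) * h u := by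
    intro u
    simp only [conv, ← intervalIntegral.integral_mul_const, ← mul_assoc]
    simpa [sub_sub] using intervalIntegral.integral_comp_sub_right
      (fun r => f (t - u - r) * g r * h u) u (a := u) (b := t)
  simp only [conv, ← intervalIntegral.integral_const_mul]
  rw [intervalIntegral_triangle_swap (F := fun s u => f (t - s) * (g (s - u) * h u))
    (by fun_prop) ht]
  exact intervalIntegral.integral_congr fun u _ => (hinner u).symm

lemma continuous_convPow {f : ℝ → ℝ} (hf : Continuous f) (k : ℕ) :
    Continuous (convPow f (k + 1)) := by
  induction k with
  | zero => exact hf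
  | succ k ih => exact continuous_conv hf ih

lemma convPow_congr {f f' : ℝ → ℝ} {T : ℝ} (h : EqOn f f' (Icc 0 T)) (k : ℕ) :
    EqOn (convPow f (k + 1)) (convPow f' (k + 1)) (Icc 0 T) := by
  induction k with
  | zero => exact h
  | succ k ih =>
    intro τ hτ
    have hsub : Icc 0 τ ⊆ Icc 0 T := Icc_subset_Icc_right hτ.2
    exact conv_congr hτ.1 (h.mono hsub) (ih.mono hsub)

lemma integral_pow_div_factorial (n : ℕ) (t : ℝ) :
    ∫ s in (0:ℝ)..t, s ^ n / n ! = t ^ (n + 1) / (n + 1)! := by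
  rw [intervalIntegral.integral_div, integral_pow, Nat.factorial_succ]
  push_cast
  field_simp
  ring

lemma abs_conv_le {f g : ℝ → ℝ} {t C B : ℝ} (n : ℕ) (ht : 0 ≤ t)
    (hf : ∀ s ∈ Icc 0 t, |f s| ≤ C) (hg : ∀ s ∈ Icc 0 t, |g s| ≤ B * s ^ n / n !) :
    |conv f g t| ≤ C * B * t ^ (n + 1) / (n + 1)! := by
  have hC : 0 ≤ C := (abs_nonneg _).trans (hf 0 ⟨le_rfl, ht⟩)
  have hbound : ∀ s ∈ Ioc 0 t, ‖f (t - s) * g s‖ ≤ C * B * (s ^ n / n !) := by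
    intro s hs
    rw [Real.norm_eq_abs, abs_mul, mul_assoc, ← mul_div_assoc]
    exact mul_le_mul (hf _ ⟨sub_nonneg.2 hs.2, by linarith [hs.1]⟩)
      (hg s (Ioc_subset_Icc_self hs)) (abs_nonneg _) hC
  calc |conv f g t|
      ≤ ∫ s in (0:ℝ)..t, C * B * (s ^ n / n !) :=
        intervalIntegral.norm_integral_le_of_norm_le ht (ae_of_all _ hbound)
          (Continuous.intervalIntegrable (by fun_prop) _ _)
    _ = C * B * t ^ (n + 1) / (n + 1)! := by
        rw [intervalIntegral.integral_const_mul, integral_pow_div_factorial, mul_div_assoc]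

lemma abs_convPow_le {f : ℝ → ℝ} {T C : ℝ} (hf : ∀ s ∈ Icc 0 T, |f s| ≤ C) (k : ℕ) :
    ∀ τ ∈ Icc 0 T, |convPow f (k + 1) τ| ≤ C ^ (k + 1) * τ ^ k / k ! := by
  induction k with
  | zero => intro τ hτ; simpa [convPow] using hf τ hτ
  | succ k ih =>
    intro τ hτ
    have := abs_conv_le k hτ.1 (fun s hs => hf s ⟨hs.1, hs.2.trans hτ.2⟩)
      (fun s hs => ih s ⟨hs.1, hs.2.trans hτ.2⟩)
    rw [pow_succ']
    exact this

lemma eqOn_of_eq_add_conv {L f y₁ y₂ : ℝ → ℝ} (hL : Continuous L) {T : ℝ}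
    (h₁ : ContinuousOn y₁ (Icc 0 T)) (h₂ : ContinuousOn y₂ (Icc 0 T))
    (hy₁ : ∀ r ∈ Icc 0 T, y₁ r = f r + conv L y₁ r)
    (hy₂ : ∀ r ∈ Icc 0 T, y₂ r = f r + conv L y₂ r) : EqOn y₁ y₂ (Icc 0 T) := by
  set z := fun τ => y₁ τ - y₂ τ
  have hz : ∀ r ∈ Icc 0 T, z r = conv L z r := by
    intro r hr
    show y₁ r - y₂ r = _
    have hsub : Icc 0 r ⊆ Icc 0 T := Icc_subset_Icc_right hr.2
    rw [conv_sub_right hL hr.1 (h₁.mono hsub) (h₂.mono hsub), hy₁ r hr, hy₂ r hr]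
    ring
  obtain ⟨B, hB⟩ := isCompact_Icc.exists_bound_of_continuousOn (h₁.sub h₂)
  obtain ⟨C, hC⟩ := isCompact_Icc.exists_bound_of_continuousOn (hL.continuousOn (s := Icc 0 T))
  -- iterating `z = L * z` from `|z| ≤ B`
  have hpow : ∀ n : ℕ, ∀ r ∈ Icc 0 T, |z r| ≤ B * C ^ n * r ^ n / n ! := by
    intro n
    induction n with
    | zero => simpa using hB
    | succ n ih =>
      intro r hr
      rw [hz r hr]
      refine (abs_conv_le n hr.1 (fun s hs => hC s ⟨hs.1, hs.2.trans hr.2⟩)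
        (fun s hs => ih s ⟨hs.1, hs.2.trans hr.2⟩)).trans_eq ?_
      ring
  intro r hr
  have hlim : Tendsto (fun n : ℕ => B * ((C * r) ^ n / n !)) atTop (𝓝 0) := by
    simpa using (Real.summable_pow_div_factorial (C * r)).tendsto_atTop_zero.const_mul B
  have : |z r| ≤ 0 := ge_of_tendsto' hlim fun n => (hpow n r hr).trans_eq (by ring)
  exact sub_eq_zero.1 (abs_nonpos_iff.1 this)

/-- `expMonomial lam 0` is the fundamental solution of `x' + λx = 0`, and `expMonomial lam k` is
its `(k+1)`-fold convolution power. -/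
def expMonomial (lam : ℝ) (k : ℕ) (s : ℝ) : ℝ := s ^ k / k ! * Real.exp (-(lam * s))

lemma expMonomial_zero (lam : ℝ) : expMonomial lam 0 = fun s => Real.exp (-(lam * s)) := by
  funext s
  simp [expMonomial]

lemma continuous_expMonomial (lam : ℝ) (k : ℕ) : Continuous (expMonomial lam k) := by
  unfold expMonomial
  fun_prop

lemma conv_expMonomial_zero (lam : ℝ) (k : ℕ) :
    conv (expMonomial lam 0) (expMonomial lam k) = expMonomial lam (k + 1) := by
  funext t
  have h : ∀ s, expMonomial lam 0 (t - s) * expMonomial lam k s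
      = Real.exp (-(lam * t)) * (s ^ k / k !) := by
    intro s
    simp only [expMonomial, pow_zero, Nat.factorial_zero, Nat.cast_one, div_one, one_mul]
    rw [mul_left_comm, ← Real.exp_add]
    ring_nf
  change ∫ s in (0:ℝ)..t, expMonomial lam 0 (t - s) * expMonomial lam k s = _
  simp only [h, intervalIntegral.integral_const_mul, integral_pow_div_factorial]
  rw [expMonomial]
  ring

lemma abs_expMonomial_le (lam : ℝ) (k : ℕ) {T s : ℝ} (hs : s ∈ Icc 0 T) :
    |expMonomial lam k s| ≤ T ^ k * Real.exp (|lam| * T) := by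
  have hpow : s ^ k / k ! ≤ T ^ k :=
    (div_le_self (pow_nonneg hs.1 k) (by exact_mod_cast k.factorial_pos)).trans
      (pow_le_pow_left₀ hs.1 hs.2 k)
  have hexp : Real.exp (-(lam * s)) ≤ Real.exp (|lam| * T) := by
    refine Real.exp_le_exp.2 ((neg_le_abs _).trans ?_)
    rw [abs_mul, abs_of_nonneg hs.1]
    exact mul_le_mul_of_nonneg_left hs.2 (abs_nonneg lam)
  rw [expMonomial, abs_of_nonneg (by have := hs.1; positivity)]
  exact mul_le_mul hpow hexp (Real.exp_pos _).le (pow_nonneg (hs.1.trans hs.2) k)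

lemma eq_mul_expMonomial_add_conv {x x' f : ℝ → ℝ} {lam : ℝ}
    (hx : ∀ t ∈ Ici (0:ℝ), HasDerivWithinAt x (x' t) (Ici 0) t) (hf : Continuous f)
    (hxf : ∀ t ∈ Ici (0:ℝ), x' t + lam * x t = f t) {r : ℝ} (hr : 0 ≤ r) :
    x r = x 0 * expMonomial lam 0 r + conv (expMonomial lam 0) f r := by
  simp only [expMonomial_zero]
  -- variation of constants: `(e^{λt} x(t))' = e^{λt} f(t)`
  have hu : ∀ t ∈ Ici (0:ℝ), HasDerivWithinAt (fun τ => Real.exp (lam * τ) * x τ)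
      (Real.exp (lam * t) * f t) (Ici 0) t := by
    intro t ht
    have hE := ((hasDerivAt_id t).const_mul lam).exp.hasDerivWithinAt (s := Ici 0)
    refine (hE.mul (hx t ht)).congr_deriv ?_
    rw [← hxf t ht]
    simp only [id, mul_one]
    ring
  have hFTC : ∫ s in (0:ℝ)..r, Real.exp (lam * s) * f s = Real.exp (lam * r) * x r - x 0 := by
    rw [intervalIntegral.integral_eq_sub_of_hasDeriv_right_of_le hr
      (fun t ht => (hu t ht.1).continuousWithinAt.mono Icc_subset_Ici_self)
      (fun t ht => (hu t (le_of_lt ht.1)).mono (Ioi_subset_Ici ht.1.le))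
      (Continuous.intervalIntegrable (by fun_prop) _ _)]
    simp
  have hconv : conv (fun τ => Real.exp (-(lam * τ))) f r
      = Real.exp (-(lam * r)) * ∫ s in (0:ℝ)..r, Real.exp (lam * s) * f s := by
    rw [conv, ← intervalIntegral.integral_const_mul]
    refine intervalIntegral.integral_congr fun s _ => ?_
    rw [← mul_assoc, ← Real.exp_add]
    ring_nf
  rw [hconv, hFTC, mul_sub, ← mul_assoc, ← Real.exp_add, neg_add_cancel, Real.exp_zero]
  ring

lemma intervalIntegral_tsum_of_abs_le {F : ℕ → ℝ → ℝ} (hF : ∀ k, Continuous (F k)) {u : ℕ → ℝ}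
    (hu : Summable u) {t : ℝ} (ht : 0 ≤ t) (hb : ∀ k, ∀ s ∈ Icc 0 t, |F k s| ≤ u k) :
    ∫ s in (0:ℝ)..t, ∑' k, F k s = ∑' k, ∫ s in (0:ℝ)..t, F k s := by
  have hb' : ∀ k, ∀ s ∈ uIoc 0 t, ‖F k s‖ ≤ u k := fun k s hs =>
    hb k s (Ioc_subset_Icc_self (by rwa [uIoc_of_le ht] at hs))
  refine (intervalIntegral.hasSum_integral_of_dominated_convergence (fun k _ => u k)
    (fun k => (hF k).aestronglyMeasurable) (fun k => ae_of_all _ (hb' k))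
    (ae_of_all _ fun _ _ => hu) intervalIntegrable_const
    (ae_of_all _ fun s hs => (hu.of_norm_bounded fun k => hb' k s hs).hasSum)).tsum_eq.symm

def resolventTerm (N : ℝ → ℝ) (lam : ℝ) (k : ℕ) : ℝ → ℝ :=
  conv (convPow N k) (expMonomial lam k)

/-- With `E = expMonomial lam 0`, the function `E + resolventSeries N lam` solves the Volterra
equation `y = E + (E * N) * y`. -/
def resolventSeries (N : ℝ → ℝ) (lam : ℝ) (t : ℝ) : ℝ :=
  ∑' k, resolventTerm N lam (k + 1) t

section Resolvent

variable (lam : ℝ) {N : ℝ → ℝ}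

lemma continuous_resolventTerm (hN : Continuous N) (k : ℕ) :
    Continuous (resolventTerm N lam (k + 1)) :=
  continuous_conv (continuous_convPow hN k) (continuous_expMonomial lam _)

lemma conv_conv_expMonomial_self (hN : Continuous N) {t : ℝ} (ht : 0 ≤ t) :
    conv (conv (expMonomial lam 0) N) (expMonomial lam 0) t = resolventTerm N lam 1 t := by
  have hE := continuous_expMonomial lam 0
  rw [conv_comm _ N, conv_assoc hN hE hE ht, conv_expMonomial_zero]
  rfl

lemma conv_conv_expMonomial_resolventTerm (hN : Continuous N) (k : ℕ) {t : ℝ} (ht : 0 ≤ t) :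
    conv (conv (expMonomial lam 0) N) (resolventTerm N lam (k + 1)) t
      = resolventTerm N lam (k + 2) t := by
  set E := expMonomial lam 0
  set g := expMonomial lam (k + 1)
  have hE : Continuous E := continuous_expMonomial lam 0
  have hg : Continuous g := continuous_expMonomial lam (k + 1)
  have hP := continuous_convPow hN k
  have hP' := continuous_convPow hN (k + 1)
  calc conv (conv E N) (conv (convPow N (k + 1)) g) t
      = conv E (conv N (conv (convPow N (k + 1)) g)) t :=
        conv_assoc hE hN (continuous_conv hP hg) ht
    _ = conv E (conv (convPow N (k + 2)) g) t :=
        conv_congr ht (fun _ _ => rfl) fun s hs => (conv_assoc hN hP hg hs.1).symm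
    _ = conv (convPow N (k + 2)) (conv E g) t := by
        rw [← conv_assoc hE hP' hg ht, conv_comm E, conv_assoc hP' hE hg ht]
    _ = resolventTerm N lam (k + 2) t := by
        rw [conv_expMonomial_zero]
        rfl

lemma exists_summable_bound_convPow_mul_expMonomial (hN : Continuous N) (T : ℝ) :
    ∃ u : ℕ → ℝ, Summable u ∧ ∀ k, ∀ r ∈ Icc 0 T, ∀ s ∈ Icc 0 r,
      |convPow N (k + 1) (r - s) * expMonomial lam (k + 1) s| ≤ u k := by
  obtain ⟨C, hC⟩ := isCompact_Icc.exists_bound_of_continuousOn (hN.continuousOn (s := Icc 0 T))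
  refine ⟨fun k => C * T * Real.exp (|lam| * T) * ((C * T ^ 2) ^ k / k !),
    (Real.summable_pow_div_factorial _).mul_left _, fun k r hr s hs => ?_⟩
  have hrs : r - s ∈ Icc 0 T := ⟨sub_nonneg.2 hs.2, by linarith [hs.1, hr.2]⟩
  have hT : 0 ≤ T := hrs.1.trans hrs.2
  have hC0 : 0 ≤ C := (norm_nonneg _).trans (hC _ hrs)
  have hconv : |convPow N (k + 1) (r - s)| ≤ C ^ (k + 1) * T ^ k / k ! := by
    refine (abs_convPow_le hC k _ hrs).trans ?_
    gcongr
    exacts [hrs.1, hrs.2]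
  rw [abs_mul]
  refine (mul_le_mul hconv (abs_expMonomial_le lam (k + 1) ⟨hs.1, hs.2.trans hr.2⟩)
    (abs_nonneg _) (by positivity)).trans_eq ?_
  ring

lemma exists_summable_bound_resolventTerm (hN : Continuous N) (T : ℝ) :
    ∃ v : ℕ → ℝ, Summable v ∧ ∀ k, ∀ r ∈ Icc 0 T, |resolventTerm N lam (k + 1) r| ≤ v k := by
  obtain ⟨u, hu, hb⟩ := exists_summable_bound_convPow_mul_expMonomial lam hN T
  refine ⟨fun k => T * u k, hu.mul_left T, fun k r hr => ?_⟩
  have hu0 : 0 ≤ u k := (abs_nonneg _).trans (hb k r hr r ⟨hr.1, le_rfl⟩)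
  calc |resolventTerm N lam (k + 1) r|
        = ‖∫ s in (0:ℝ)..r, convPow N (k + 1) (r - s) * expMonomial lam (k + 1) s‖ := rfl
    _ ≤ u k * |r - 0| :=
        intervalIntegral.norm_integral_le_of_norm_le_const fun s hs =>
          hb k r hr s (Ioc_subset_Icc_self (by rwa [uIoc_of_le hr.1] at hs))
    _ ≤ T * u k := by
        rw [sub_zero, abs_of_nonneg hr.1, mul_comm]
        exact mul_le_mul_of_nonneg_right hr.2 hu0

lemma continuousOn_resolventSeries (hN : Continuous N) (T : ℝ) :
    ContinuousOn (resolventSeries N lam) (Icc 0 T) := by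
  obtain ⟨v, hv, hb⟩ := exists_summable_bound_resolventTerm lam hN T
  exact continuousOn_tsum (fun k => (continuous_resolventTerm lam hN k).continuousOn) hv hb

lemma conv_conv_expMonomial_add_resolventSeries (hN : Continuous N) {t : ℝ} (ht : 0 ≤ t) :
    conv (conv (expMonomial lam 0) N) (fun τ => expMonomial lam 0 τ + resolventSeries N lam τ) t
      = resolventSeries N lam t := by
  set L := conv (expMonomial lam 0) N
  have hL : Continuous L := continuous_conv (continuous_expMonomial lam 0) hN
  obtain ⟨v, hv, hvb⟩ := exists_summable_bound_resolventTerm lam hN t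
  obtain ⟨C, hC⟩ := isCompact_Icc.exists_bound_of_continuousOn (hL.continuousOn (s := Icc 0 t))
  have hC0 : 0 ≤ C := (norm_nonneg _).trans (hC t ⟨ht, le_rfl⟩)
  have hLS : conv L (resolventSeries N lam) t = ∑' k, resolventTerm N lam (k + 2) t := by
    calc conv L (resolventSeries N lam) t
        = ∫ s in (0:ℝ)..t, ∑' k, L (t - s) * resolventTerm N lam (k + 1) s := by
          simp only [conv, resolventSeries, tsum_mul_left]
      _ = ∑' k, conv L (resolventTerm N lam (k + 1)) t := by
          refine intervalIntegral_tsum_of_abs_le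
            (F := fun k s => L (t - s) * resolventTerm N lam (k + 1) s)
            (fun k => (hL.comp (continuous_sub_left t)).mul (continuous_resolventTerm lam hN k))
            (hv.mul_left C) ht fun k s hs => ?_
          rw [abs_mul]
          exact mul_le_mul (hC _ ⟨sub_nonneg.2 hs.2, by linarith [hs.1]⟩) (hvb k s hs)
            (abs_nonneg _) hC0
      _ = ∑' k, resolventTerm N lam (k + 2) t :=
          tsum_congr fun k => conv_conv_expMonomial_resolventTerm lam hN k ht
  rw [conv_add_right hL ht (continuous_expMonomial lam 0).continuousOn
    (continuousOn_resolventSeries lam hN t), hLS, conv_conv_expMonomial_self lam hN ht,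
    resolventSeries]
  exact (Summable.tsum_eq_zero_add (hv.of_norm_bounded
    (f := fun k => resolventTerm N lam (k + 1) t) fun k => hvb k t ⟨ht, le_rfl⟩)).symm

lemma integral_KM_mul_exp {M : ℝ → ℝ} (hN : Continuous N) {t : ℝ} (ht : 0 ≤ t)
    (hMN : EqOn (fun τ => -M τ) N (Icc 0 t)) :
    ∫ s in (0:ℝ)..t, KM M t s * Real.exp (-(lam * s)) = resolventSeries N lam t := by
  obtain ⟨u, hu, hb⟩ := exists_summable_bound_convPow_mul_expMonomial lam hN t
  calc ∫ s in (0:ℝ)..t, KM M t s * Real.exp (-(lam * s))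
      = ∫ s in (0:ℝ)..t, ∑' k, convPow N (k + 1) (t - s) * expMonomial lam (k + 1) s := by
        refine intervalIntegral.integral_congr fun s hs => ?_
        rw [uIcc_of_le ht] at hs
        simp only [KM, ← tsum_mul_right]
        refine tsum_congr fun k => ?_
        rw [convPow_congr hMN k ⟨sub_nonneg.2 hs.2, by linarith [hs.1]⟩, expMonomial]
        ring
    _ = resolventSeries N lam t :=
        intervalIntegral_tsum_of_abs_le
          (fun k => ((continuous_convPow hN k).comp (continuous_sub_left t)).mul
            (continuous_expMonomial lam _))
          hu ht fun k s hs => hb k t ⟨ht, le_rfl⟩ s hs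

end Resolvent

lemma exists_continuous_eqOn_Ici {f : ℝ → ℝ} (hf : ContinuousOn f (Ici 0)) :
    ∃ g : ℝ → ℝ, Continuous g ∧ EqOn g f (Ici 0) :=
  ⟨fun τ => f (max τ 0), hf.comp_continuous (continuous_id.max continuous_const)
    (fun τ => le_max_right τ 0), fun τ hτ => by simp only [max_eq_left (mem_Ici.1 hτ)]⟩

/-- Integral representation of the solution of the memory ODE. -/
theorem stmt2 (M : ℝ → ℝ) (hM : ContDiffOn ℝ 2 M (Set.Ici 0)) (lam : ℝ)
    (x x' : ℝ → ℝ) (hx : MemSol M lam x x') :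
    ∀ t ≥ (0:ℝ),
      x t = Real.exp (-(lam * t)) + ∫ s in (0:ℝ)..t, KM M t s * Real.exp (-(lam * s)) := by
  obtain ⟨hx0, -, hxd, hode⟩ := hx
  obtain ⟨N, hN, hNM⟩ := exists_continuous_eqOn_Ici hM.continuousOn.neg
  obtain ⟨X, hX, hXx⟩ := exists_continuous_eqOn_Ici fun t ht => (hxd t ht).continuousWithinAt
  have hE := continuous_expMonomial lam 0
  have hXeq : ∀ r ∈ Ici (0:ℝ),
      X r = expMonomial lam 0 r + conv (conv (expMonomial lam 0) N) X r := by
    intro r hr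
    have hforce : ∀ τ ∈ Ici (0:ℝ), x' τ + lam * x τ = conv N X τ := by
      intro τ hτ
      rw [conv_congr hτ (hNM.mono Icc_subset_Ici_self) (hXx.mono Icc_subset_Ici_self),
        conv_neg_left, Pi.neg_apply]
      linarith [hode τ hτ, show conv M x τ = ∫ s in (0:ℝ)..τ, M (τ - s) * x s from rfl]
    rw [hXx hr, eq_mul_expMonomial_add_conv hxd (continuous_conv hN hX) hforce hr, hx0, one_mul,
      conv_assoc hE hN hX hr]
  intro t ht
  have hXS : EqOn X (fun τ => expMonomial lam 0 τ + resolventSeries N lam τ) (Icc 0 t) :=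
    eqOn_of_eq_add_conv (continuous_conv hE hN) hX.continuousOn
      (hE.continuousOn.add (continuousOn_resolventSeries lam hN t))
      (fun r hr => hXeq r hr.1)
      (fun r hr => by rw [conv_conv_expMonomial_add_resolventSeries lam hN hr.1])
  rw [integral_KM_mul_exp lam hN ht (hNM.symm.mono Icc_subset_Ici_self), ← hXx (mem_Ici.2 ht),
    hXS ⟨ht, le_rfl⟩]
  simp only [expMonomial_zero]
end
end

section
/- Let M be of class C² on [0,∞) with M(τ) ≤ 0 for all τ ≥ 0, and let λ > 0. Then the unique solution x of the memory ODE with parameter λ satisfies x(t) ≥ e^{−λt} > 0 for all t ≥ 0; in particular x has no zeros in (0,∞). -/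
/-!
Multiplying the equation by `e^{λt}` gives `(x e^{λt})' = -e^{λt} ∫₀ᵗ M(t−s) x(s) ds`, which is
`≥ 0` as long as `x ≥ 0` on `[0,t]`, because `M ≤ 0`. So `x e^{λt} ≥ x(0) = 1` on every interval
`[0,T]` on which `x ≥ 0`; in particular `x(T) > 0` there. A first-zero argument then shows that
`x > 0` on all of `[0,∞)`, and the bound `x(t) ≥ e^{−λt}` holds everywhere.
-/

noncomputable section

open Set

theorem intervalIntegral_comp_sub_mul_nonpos {M x : ℝ → ℝ} (hM0 : ∀ τ ≥ (0:ℝ), M τ ≤ 0)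
    {t : ℝ} (ht : 0 ≤ t) (hx : ∀ s ∈ Icc 0 t, 0 ≤ x s) :
    ∫ s in (0:ℝ)..t, M (t - s) * x s ≤ 0 := by
  have h : 0 ≤ ∫ s in (0:ℝ)..t, -(M (t - s) * x s) :=
    intervalIntegral.integral_nonneg ht fun s hs =>
      neg_nonneg.mpr (mul_nonpos_of_nonpos_of_nonneg (hM0 _ (sub_nonneg.mpr hs.2)) (hx s hs))
  rwa [intervalIntegral.integral_neg, neg_nonneg] at h

theorem monotoneOn_mul_exp_of_deriv_add_mul_nonneg {x x' : ℝ → ℝ} {lam a b : ℝ}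
    (hxc : ContinuousOn x (Icc a b)) (hd : ∀ t ∈ Ioo a b, HasDerivAt x (x' t) t)
    (hnn : ∀ t ∈ Ioo a b, 0 ≤ x' t + lam * x t) :
    MonotoneOn (fun t => x t * Real.exp (lam * t)) (Icc a b) := by
  have hderiv : ∀ t ∈ Ioo a b, HasDerivAt (fun t => x t * Real.exp (lam * t))
      ((x' t + lam * x t) * Real.exp (lam * t)) t := fun t ht =>
    ((hd t ht).mul ((hasDerivAt_id' t).const_mul lam).exp).congr_deriv (by ring)
  refine monotoneOn_of_hasDerivWithinAt_nonneg (convex_Icc a b)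
    (f' := fun t => (x' t + lam * x t) * Real.exp (lam * t))
    (hxc.mul (by fun_prop)) (fun t ht => ?_) (fun t ht => ?_)
  · rw [interior_Icc] at ht ⊢
    exact (hderiv t ht).hasDerivWithinAt
  · rw [interior_Icc] at ht
    exact mul_nonneg (hnn t ht) (Real.exp_pos _).le

theorem pos_of_forall_nonneg_on_Icc_imp_pos {x : ℝ → ℝ} (hxc : ContinuousOn x (Ici 0))
    (h0 : 0 < x 0) (hstep : ∀ T ≥ (0:ℝ), (∀ s ∈ Icc 0 T, 0 ≤ x s) → 0 < x T) :
    ∀ t ≥ (0:ℝ), 0 < x t := by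
  by_contra! ⟨t, ht, hxt⟩
  set Z := Icc 0 t ∩ x ⁻¹' Iic 0
  have hZ : IsClosed Z :=
    (hxc.mono Icc_subset_Ici_self).preimage_isClosed_of_isClosed isClosed_Icc isClosed_Iic
  have hZbdd : BddBelow Z := ⟨0, fun s hs => hs.1.1⟩
  have ht0Z : sInf Z ∈ Z := hZ.csInf_mem ⟨t, ⟨ht, le_rfl⟩, hxt⟩ hZbdd
  set t0 := sInf Z
  have ht0 : 0 < t0 := ht0Z.1.1.lt_of_ne fun h => by
    rw [← h] at ht0Z
    exact ht0Z.2.not_gt h0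
  have hbefore : ∀ s ∈ Ico 0 t0, 0 ≤ x s := fun s hs => by
    by_contra! hs'
    exact hs.2.not_ge (csInf_le hZbdd ⟨⟨hs.1, hs.2.le.trans ht0Z.1.2⟩, hs'.le⟩)
  have hupto : ∀ s ∈ Icc 0 t0, 0 ≤ x s := by
    rw [← closure_Ico ht0.ne]
    exact le_on_closure (f := 0) hbefore continuousOn_const
      (hxc.mono (closure_Ico ht0.ne ▸ Icc_subset_Ici_self))
  exact (hstep t0 ht0.le hupto).not_ge ht0Z.2

namespace MemSol

variable {M : ℝ → ℝ} {lam : ℝ} {x x' : ℝ → ℝ}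

theorem continuousOn_s4 (hx : MemSol M lam x x') : ContinuousOn x (Ici 0) :=
  fun t ht => (hx.2.2.1 t ht).continuousWithinAt

theorem one_le_mul_exp_of_nonneg (hM0 : ∀ τ ≥ (0:ℝ), M τ ≤ 0) (hx : MemSol M lam x x')
    {T : ℝ} (hT : 0 ≤ T) (hnn : ∀ s ∈ Icc 0 T, 0 ≤ x s) :
    1 ≤ x T * Real.exp (lam * T) := by
  have hxc := hx.continuousOn_s4
  obtain ⟨hx0, -, hderiv, heq⟩ := hx
  have hmono := monotoneOn_mul_exp_of_deriv_add_mul_nonneg (lam := lam)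
    (hxc.mono Icc_subset_Ici_self)
    (fun t ht => (hderiv t ht.1.le).hasDerivAt (Ici_mem_nhds ht.1))
    (fun t ht => by
      have hI := intervalIntegral_comp_sub_mul_nonpos hM0 ht.1.le
        fun s hs => hnn s ⟨hs.1, hs.2.trans ht.2.le⟩
      linarith [heq t ht.1.le])
    ⟨le_rfl, hT⟩ ⟨hT, le_rfl⟩ hT
  simpa [hx0] using hmono

theorem pos (hM0 : ∀ τ ≥ (0:ℝ), M τ ≤ 0) (hx : MemSol M lam x x') :
    ∀ t ≥ (0:ℝ), 0 < x t :=
  pos_of_forall_nonneg_on_Icc_imp_pos hx.continuousOn_s4 (hx.1 ▸ one_pos) fun _ hT hnn =>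
    pos_of_mul_pos_left (one_pos.trans_le (hx.one_le_mul_exp_of_nonneg hM0 hT hnn))
      (Real.exp_pos _).le

end MemSol

theorem stmt4_general (M : ℝ → ℝ)
    (hM0 : ∀ τ ≥ (0:ℝ), M τ ≤ 0) (lam : ℝ)
    (x x' : ℝ → ℝ) (hx : MemSol M lam x x') :
    (∀ t ≥ (0:ℝ), Real.exp (-(lam * t)) ≤ x t ∧ 0 < x t) ∧
    (∀ t > (0:ℝ), x t ≠ 0) := by
  have hpos := hx.pos hM0
  refine ⟨fun t ht => ⟨?_, hpos t ht⟩, fun t ht => (hpos t ht.le).ne'⟩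
  have h := hx.one_le_mul_exp_of_nonneg hM0 ht fun s hs => (hpos s hs.1).le
  rwa [Real.exp_neg, inv_le_iff_one_le_mul₀ (Real.exp_pos _)]

/-- For `C²` nonpositive kernels and `λ > 0`, the solution dominates `e^{−λt}` and never
vanishes on `(0,∞)`. -/
theorem stmt4 (M : ℝ → ℝ) (hM : ContDiffOn ℝ 2 M (Set.Ici 0))
    (hM0 : ∀ τ ≥ (0:ℝ), M τ ≤ 0) (lam : ℝ) (hlam : 0 < lam)
    (x x' : ℝ → ℝ) (hx : MemSol M lam x x') :
    (∀ t ≥ (0:ℝ), Real.exp (-(lam * t)) ≤ x t ∧ 0 < x t) ∧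
    (∀ t > (0:ℝ), x t ≠ 0) :=
  stmt4_general M hM0 lam x x' hx
end
end

section
/- Let c > 0, α ∈ ℝ, λ ∈ ℝ, set s = (λ+α)² − 4c, and assume s > 0. Define w⁺ = (−(λ−α) + √s)/2 and w⁻ = (−(λ−α) − √s)/2. Then the unique solution x of the memory ODE with kernel M(t) = c·e^{αt} and parameter λ is given by x(t) = [(w⁺−α)·e^{w⁺t} − (w⁻−α)·e^{w⁻t}] / (w⁺ − w⁻) for all t ≥ 0. -/
/-!
Writing `G t = ∫₀ᵗ e^{α(t-s)} x(s) ds`, the memory term is `c·G` and `G' = x + α G`, so the pair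
`(x, G)` solves the constant-coefficient linear system `x' = -λ x - c G`, `G' = x + α G` with
initial value `(1, 0)`. The roots `w±` of the characteristic equation `(w - α)(w + λ) = -c` give
the eigen-solutions `t ↦ e^{wt} (w - α, 1)`; the combination of them with initial value `(1, 0)`
is the claimed formula, and solutions of a linear system are unique by Grönwall.
-/

noncomputable section

open Set Real

theorem ContinuousOn.hasDerivWithinAt_integral_Ici {E : Type*} [NormedAddCommGroup E]
    [NormedSpace ℝ E] [CompleteSpace E] {f : ℝ → E} {a t : ℝ} (hf : ContinuousOn f (Ici a))
    (ht : t ∈ Ici a) :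
    HasDerivWithinAt (fun u => ∫ s in a..u, f s) (f t) (Ici a) t := by
  have hg : Continuous fun s => f (max a s) :=
    hf.comp_continuous (continuous_const.max continuous_id) fun s => le_max_left a s
  have hfg : EqOn (fun u => ∫ s in a..u, f s) (fun u => ∫ s in a..u, f (max a s)) (Ici a) := by
    intro u hu
    refine intervalIntegral.integral_congr fun s hs => ?_
    rw [uIcc_of_le hu] at hs
    simp only [max_eq_right hs.1]
  have := (hg.integral_hasStrictDerivAt a t).hasDerivAt.hasDerivWithinAt (s := Ici a)
  rw [show max a t = t from max_eq_right ht] at this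
  exact this.congr hfg (hfg ht)

theorem hasDerivWithinAt_integral_exp_mul_sub {x : ℝ → ℝ} {α t : ℝ}
    (hx : ContinuousOn x (Ici 0)) (ht : t ∈ Ici 0) :
    HasDerivWithinAt (fun t => ∫ s in (0 : ℝ)..t, exp (α * (t - s)) * x s)
      (x t + α * ∫ s in (0 : ℝ)..t, exp (α * (t - s)) * x s) (Ici 0) t := by
  have hsplit : (fun t => ∫ s in (0 : ℝ)..t, exp (α * (t - s)) * x s) =
      fun t => exp (α * t) * ∫ s in (0 : ℝ)..t, exp (-(α * s)) * x s := by
    funext t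
    rw [← intervalIntegral.integral_const_mul]
    refine intervalIntegral.integral_congr fun s _ => ?_
    rw [mul_sub, sub_eq_add_neg, exp_add]
    ring
  have hexp : HasDerivAt (fun t => exp (α * t)) (exp (α * t) * α) t := by
    simpa using ((hasDerivAt_id t).const_mul α).exp
  have hcont : ContinuousOn (fun s => exp (-(α * s)) * x s) (Ici 0) :=
    (continuous_exp.comp (continuous_const.mul continuous_id).neg).continuousOn.mul hx
  have hprim := hcont.hasDerivWithinAt_integral_Ici ht
  rw [hsplit]
  refine (hexp.hasDerivWithinAt.mul hprim).congr_deriv ?_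
  rw [congrFun hsplit t, exp_neg]
  field_simp
  ring

def expKernelSystem (c α lam : ℝ) : ℝ × ℝ →L[ℝ] ℝ × ℝ :=
  ((-lam) • ContinuousLinearMap.fst ℝ ℝ ℝ - c • ContinuousLinearMap.snd ℝ ℝ ℝ).prod
    (ContinuousLinearMap.fst ℝ ℝ ℝ + α • ContinuousLinearMap.snd ℝ ℝ ℝ)

@[simp]
theorem expKernelSystem_apply (c α lam : ℝ) (p : ℝ × ℝ) :
    expKernelSystem c α lam p = (-(lam * p.1) - c * p.2, p.1 + α * p.2) := by
  simp [expKernelSystem]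

theorem ODE_solution_unique_linear_Ici {E : Type*} [NormedAddCommGroup E] [NormedSpace ℝ E]
    (L : E →L[ℝ] E) {f g : ℝ → E} {a : ℝ}
    (hf : ∀ t ∈ Ici a, HasDerivWithinAt f (L (f t)) (Ici a) t)
    (hg : ∀ t ∈ Ici a, HasDerivWithinAt g (L (g t)) (Ici a) t) (ha : f a = g a) :
    EqOn f g (Ici a) := by
  intro T hT
  have hcont : ∀ {h : ℝ → E}, (∀ t ∈ Ici a, HasDerivWithinAt h (L (h t)) (Ici a) t) →
      ContinuousOn h (Icc a T) := fun hh t ht =>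
    (hh t ht.1).continuousWithinAt.mono Icc_subset_Ici_self
  have hright : ∀ {h : ℝ → E}, (∀ t ∈ Ici a, HasDerivWithinAt h (L (h t)) (Ici a) t) →
      ∀ t ∈ Ico a T, HasDerivWithinAt h (L (h t)) (Ici t) t := fun hh t ht =>
    (hh t ht.1).mono (Ici_subset_Ici.2 ht.1)
  exact ODE_solution_unique_of_mem_Icc_right (v := fun _ => L) (s := fun _ => univ)
    (fun _ _ => L.lipschitz.lipschitzOnWith) (hcont hf) (hright hf) (fun _ _ => mem_univ _)
    (hcont hg) (hright hg) (fun _ _ => mem_univ _) ha (right_mem_Icc.2 hT)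

theorem MemSol.hasDerivWithinAt_expKernelSystem {c α lam : ℝ} {x x' : ℝ → ℝ}
    (hx : MemSol (fun t => c * exp (α * t)) lam x x') {t : ℝ} (ht : t ∈ Ici 0) :
    HasDerivWithinAt (fun t => (x t, ∫ s in (0 : ℝ)..t, exp (α * (t - s)) * x s))
      (expKernelSystem c α lam (x t, ∫ s in (0 : ℝ)..t, exp (α * (t - s)) * x s)) (Ici 0) t := by
  obtain ⟨-, -, hxd, hode⟩ := hx
  have hxc : ContinuousOn x (Ici 0) := fun t ht => (hxd t ht).continuousWithinAt
  have hmemory : ∫ s in (0 : ℝ)..t, c * exp (α * (t - s)) * x s =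
      c * ∫ s in (0 : ℝ)..t, exp (α * (t - s)) * x s := by
    simp only [mul_assoc, intervalIntegral.integral_const_mul]
  refine ((hxd t ht).prodMk (hasDerivWithinAt_integral_exp_mul_sub hxc ht)).congr_deriv ?_
  have := hode t ht
  rw [hmemory] at this
  rw [expKernelSystem_apply]
  congr 1
  linarith

theorem hasDerivAt_expKernelSystem_eigen {c α lam w : ℝ} (hw : (w - α) * (w + lam) = -c)
    (t : ℝ) :
    HasDerivAt (fun t => exp (w * t) • (w - α, (1 : ℝ)))
      (expKernelSystem c α lam (exp (w * t) • (w - α, 1))) t := by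
  have hexp : HasDerivAt (fun t => exp (w * t)) (exp (w * t) * w) t := by
    simpa using ((hasDerivAt_id t).const_mul w).exp
  refine (hexp.smul_const (w - α, (1 : ℝ))).congr_deriv ?_
  simp only [expKernelSystem_apply, Prod.smul_mk, smul_eq_mul, Prod.mk.injEq]
  exact ⟨by linear_combination exp (w * t) * hw, by ring⟩

theorem stmt11_general (c α lam : ℝ)
    (hs : 0 < (lam + α) ^ 2 - 4 * c)
    (wp wm : ℝ)
    (hwp : wp = (-(lam - α) + Real.sqrt ((lam + α) ^ 2 - 4 * c)) / 2)
    (hwm : wm = (-(lam - α) - Real.sqrt ((lam + α) ^ 2 - 4 * c)) / 2)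
    (x x' : ℝ → ℝ) (hx : MemSol (fun t => c * Real.exp (α * t)) lam x x') :
    ∀ t ≥ (0:ℝ),
      x t = ((wp - α) * Real.exp (wp * t) - (wm - α) * Real.exp (wm * t)) / (wp - wm) := by
  have hsq := sq_sqrt hs.le
  have hroot_p : (wp - α) * (wp + lam) = -c := by rw [hwp]; linear_combination hsq / 4
  have hroot_m : (wm - α) * (wm + lam) = -c := by rw [hwm]; linear_combination hsq / 4
  have hgap : wp - wm ≠ 0 := by
    rw [show wp - wm = √((lam + α) ^ 2 - 4 * c) by rw [hwp, hwm]; ring]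
    exact (sqrt_pos.2 hs).ne'
  set sol : ℝ → ℝ × ℝ := fun t =>
    (wp - wm)⁻¹ • (exp (wp * t) • (wp - α, (1 : ℝ)) - exp (wm * t) • (wm - α, 1))
  have hsol : ∀ t, HasDerivAt sol (expKernelSystem c α lam (sol t)) t := fun t =>
    (((hasDerivAt_expKernelSystem_eigen hroot_p t).sub
      (hasDerivAt_expKernelSystem_eigen hroot_m t)).const_smul (wp - wm)⁻¹).congr_deriv
      (by simp only [sol, map_smul, map_sub])
  have hinit : (x 0, ∫ s in (0 : ℝ)..0, exp (α * (0 - s)) * x s) = sol 0 := by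
    simp [sol, hx.1, hgap]
  intro t ht
  have hunique : x t = (sol t).1 := congrArg Prod.fst <| ODE_solution_unique_linear_Ici _
    (fun t ht => hx.hasDerivWithinAt_expKernelSystem ht) (fun t _ => (hsol t).hasDerivWithinAt)
    hinit ht
  rw [hunique]
  simp only [sol, Prod.smul_mk, smul_eq_mul, mul_one, Prod.mk_sub_mk]
  field_simp

/-- Explicit solution of the memory ODE with kernel `c·e^{αt}` when the discriminant
`s = (λ+α)² − 4c` is positive. -/
theorem stmt11 (c α lam : ℝ) (hc : 0 < c)
    (hs : 0 < (lam + α) ^ 2 - 4 * c)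
    (wp wm : ℝ)
    (hwp : wp = (-(lam - α) + Real.sqrt ((lam + α) ^ 2 - 4 * c)) / 2)
    (hwm : wm = (-(lam - α) - Real.sqrt ((lam + α) ^ 2 - 4 * c)) / 2)
    (x x' : ℝ → ℝ) (hx : MemSol (fun t => c * Real.exp (α * t)) lam x x') :
    ∀ t ≥ (0:ℝ),
      x t = ((wp - α) * Real.exp (wp * t) - (wm - α) * Real.exp (wm * t)) / (wp - wm) :=
  stmt11_general c α lam hs wp wm hwp hwm x x' hx
end
end

section
/- Let c > 0, α ∈ ℝ, λ ∈ ℝ, set s = (λ+α)² − 4c, and assume s < 0. Let x be the unique solution of the memory ODE with kernel M(t) = c·e^{αt} and parameter λ. Then for t > 0, x(t) = 0 if and only if there exists l ∈ ℕ (l ≥ 0) such that t = (2/√(−s))·(arccot((λ+α)/√(−s)) + l·π), where arccot y := π/2 − arctan y ∈ (0,π). -/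
/-!
Because the kernel is exponential, the memory term `y t = ∫ s in 0..t, c * exp (α * (t - s)) * x s`
satisfies `y' = c x + α y`, so `(x, y)` solves the planar linear system `x' = -λ x - y`,
`y' = c x + α y` with `(x, y) 0 = (1, 0)`. Writing `λ = β + μ`, `α = μ - β`, `c = μ² + ω²`
(possible with `ω > 0` exactly when `s < 0`, and then `√(-s) = 2ω`), uniqueness for linear ODEs
gives `x t = exp (-β t) (cos ωt - (μ / ω) sin ωt)`. Finally `cos θ - B sin θ` is a positive
multiple of `cos (θ + arctan B)`, whose zeros with `θ > 0` are `θ = π/2 - arctan B + lπ`, `l ∈ ℕ`.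
-/

noncomputable section

open Real Set MeasureTheory intervalIntegral

section Primitive

variable {E : Type*} [NormedAddCommGroup E] [NormedSpace ℝ E] {f : ℝ → E} {a : ℝ}

theorem ContinuousOn.continuousOn_primitive_Ici [CompleteSpace E] (hf : ContinuousOn f (Ici a)) :
    ContinuousOn (fun u => ∫ s in a..u, f s) (Ici a) := by
  intro u hu
  have hle : a ≤ u + 1 := by linarith [mem_Ici.1 hu]
  have hcont : ContinuousOn (fun v => ∫ s in a..v, f s) (Icc a (u + 1)) := by
    rw [← uIcc_of_le hle]
    exact continuousOn_primitive_interval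
      ((hf.mono (uIcc_of_le hle ▸ Icc_subset_Ici_self)).integrableOn_compact isCompact_uIcc)
  exact (hcont u ⟨hu, by linarith⟩).mono_of_mem_nhdsWithin
    (Filter.mem_of_superset (inter_mem_nhdsWithin _ (Iio_mem_nhds (lt_add_one u)))
      fun v hv => ⟨hv.1, hv.2.le⟩)

theorem ContinuousOn.hasDerivWithinAt_primitive_Ici [CompleteSpace E]
    (hf : ContinuousOn f (Ici a)) {u : ℝ} (hu : a ≤ u) :
    HasDerivWithinAt (fun v => ∫ s in a..v, f s) (f u) (Ici u) u := by
  have hsub : Ioi u ⊆ Ici a := fun v hv => le_trans hu (le_of_lt hv)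
  refine integral_hasDerivWithinAt_right (t := Ioi u) ?_ ?_ ((hf u hu).mono hsub)
  · exact (hf.mono (by rw [uIcc_of_le hu]; exact Icc_subset_Ici_self)).intervalIntegrable
  · exact (hf.stronglyMeasurableAtFilter_nhdsWithin measurableSet_Ici u).filter_mono
      (nhdsWithin_mono _ hsub)

end Primitive

theorem ContinuousLinearMap.ODE_solution_unique_Icc {E : Type*} [NormedAddCommGroup E]
    [NormedSpace ℝ E] (L : E →L[ℝ] E) {f g : ℝ → E} {a b : ℝ}
    (hf : ContinuousOn f (Icc a b)) (hf' : ∀ t ∈ Ico a b, HasDerivWithinAt f (L (f t)) (Ici t) t)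
    (hg : ContinuousOn g (Icc a b)) (hg' : ∀ t ∈ Ico a b, HasDerivWithinAt g (L (g t)) (Ici t) t)
    (ha : f a = g a) : EqOn f g (Icc a b) :=
  ODE_solution_unique_of_mem_Icc_right (v := fun _ => L) (s := fun _ => univ) (K := ‖L‖₊)
    (fun _ _ => L.lipschitz.lipschitzOnWith) hf hf' (fun _ _ => mem_univ _) hg hg'
    (fun _ _ => mem_univ _) ha

def expMemory (c α : ℝ) (x : ℝ → ℝ) (t : ℝ) : ℝ :=
  ∫ s in (0 : ℝ)..t, c * exp (α * (t - s)) * x s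

theorem expMemory_eq_mul_integral (c α : ℝ) (x : ℝ → ℝ) (t : ℝ) :
    expMemory c α x t = c * exp (α * t) * ∫ s in (0 : ℝ)..t, exp (-(α * s)) * x s := by
  rw [expMemory, ← intervalIntegral.integral_const_mul]
  congr 1 with s
  rw [mul_sub, sub_eq_add_neg, exp_add]
  ring

theorem continuousOn_expMemory (c α : ℝ) {x : ℝ → ℝ} (hx : ContinuousOn x (Ici 0)) :
    ContinuousOn (expMemory c α x) (Ici 0) := by
  simp_rw [funext (expMemory_eq_mul_integral c α x)]
  exact (Continuous.continuousOn (by fun_prop)).mul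
    (ContinuousOn.continuousOn_primitive_Ici (f := fun s => exp (-(α * s)) * x s) (by fun_prop))

theorem hasDerivWithinAt_expMemory (c α : ℝ) {x : ℝ → ℝ} (hx : ContinuousOn x (Ici 0)) {u : ℝ}
    (hu : 0 ≤ u) :
    HasDerivWithinAt (expMemory c α x) (c * x u + α * expMemory c α x u) (Ici u) u := by
  simp_rw [funext (expMemory_eq_mul_integral c α x)]
  have hF : HasDerivWithinAt (fun v => ∫ s in (0 : ℝ)..v, exp (-(α * s)) * x s)
      (exp (-(α * u)) * x u) (Ici u) u :=
    ContinuousOn.hasDerivWithinAt_primitive_Ici (f := fun s => exp (-(α * s)) * x s)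
      (by fun_prop) hu
  refine (((((hasDerivAt_id u).const_mul α).exp).const_mul c).hasDerivWithinAt.mul
    hF).congr_deriv ?_
  rw [id, exp_neg]
  field_simp
  ring

def memoryField (lam α c : ℝ) : ℝ × ℝ →L[ℝ] ℝ × ℝ :=
  ((-lam) • ContinuousLinearMap.fst ℝ ℝ ℝ - ContinuousLinearMap.snd ℝ ℝ ℝ).prod
    (c • ContinuousLinearMap.fst ℝ ℝ ℝ + α • ContinuousLinearMap.snd ℝ ℝ ℝ)

@[simp]
theorem memoryField_apply (lam α c : ℝ) (p : ℝ × ℝ) :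
    memoryField lam α c p = (-lam * p.1 - p.2, c * p.1 + α * p.2) := by
  simp [memoryField, smul_eq_mul]

theorem MemSol.hasDerivWithinAt_memoryField {c α lam : ℝ} {x x' : ℝ → ℝ}
    (hx : MemSol (fun t => c * exp (α * t)) lam x x') {u : ℝ} (hu : 0 ≤ u) :
    HasDerivWithinAt (fun t => (x t, expMemory c α x t))
      (memoryField lam α c (x u, expMemory c α x u)) (Ici u) u := by
  obtain ⟨-, -, hxd, hxeq⟩ := hx
  have hxc : ContinuousOn x (Ici 0) := fun v hv => (hxd v hv).continuousWithinAt
  have hx' : x' u = -lam * x u - expMemory c α x u := by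
    have := hxeq u hu; rw [← expMemory] at this; linarith
  rw [memoryField_apply, ← hx']
  exact ((hxd u hu).mono (Ici_subset_Ici.2 hu)).prodMk (hasDerivWithinAt_expMemory c α hxc hu)

def expCosSin (β ω p q t : ℝ) : ℝ :=
  exp (-(β * t)) * (p * cos (ω * t) + q * sin (ω * t))

theorem hasDerivAt_expCosSin (β ω p q t : ℝ) :
    HasDerivAt (expCosSin β ω p q) (expCosSin β ω (-β * p + ω * q) (-β * q - ω * p) t) t := by
  have h := (((hasDerivAt_id t).const_mul β).neg.exp).mul
    ((((hasDerivAt_id t).const_mul ω).cos.const_mul p).add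
      (((hasDerivAt_id t).const_mul ω).sin.const_mul q))
  refine h.congr_deriv ?_
  simp only [expCosSin, id, Pi.add_apply, Pi.neg_apply]
  ring

def dampedPair (β μ ω t : ℝ) : ℝ × ℝ :=
  (expCosSin β ω 1 (-(μ / ω)) t, expCosSin β ω 0 ((μ ^ 2 + ω ^ 2) / ω) t)

theorem dampedPair_zero (β μ ω : ℝ) : dampedPair β μ ω 0 = (1, 0) := by
  simp [dampedPair, expCosSin]

theorem hasDerivAt_dampedPair {ω : ℝ} (hω : ω ≠ 0) (β μ t : ℝ) :
    HasDerivAt (dampedPair β μ ω)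
      (memoryField (β + μ) (μ - β) (μ ^ 2 + ω ^ 2) (dampedPair β μ ω t)) t := by
  refine ((hasDerivAt_expCosSin _ _ _ _ t).prodMk (hasDerivAt_expCosSin _ _ _ _ t)).congr_deriv ?_
  simp only [memoryField_apply, dampedPair, expCosSin, Prod.mk.injEq]
  constructor <;> field_simp <;> ring

theorem MemSol.eq_dampedPair_fst {β μ ω : ℝ} {x x' : ℝ → ℝ}
    (hx : MemSol (fun t => (μ ^ 2 + ω ^ 2) * exp ((μ - β) * t)) (β + μ) x x') (hω : ω ≠ 0)
    {t : ℝ} (ht : 0 ≤ t) : x t = (dampedPair β μ ω t).1 := by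
  have hxc : ContinuousOn x (Ici 0) := fun v hv => (hx.2.2.1 v hv).continuousWithinAt
  have hpair := (memoryField (β + μ) (μ - β) (μ ^ 2 + ω ^ 2)).ODE_solution_unique_Icc (b := t)
    ((hxc.mono Icc_subset_Ici_self).prodMk
      ((continuousOn_expMemory _ _ hxc).mono Icc_subset_Ici_self))
    (fun u hu => hx.hasDerivWithinAt_memoryField hu.1)
    (fun u _ => (hasDerivAt_dampedPair hω β μ u).continuousAt.continuousWithinAt)
    (fun u _ => (hasDerivAt_dampedPair hω β μ u).hasDerivWithinAt)
    (by rw [dampedPair_zero, hx.1]; simp [expMemory])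
  exact congrArg Prod.fst (hpair ⟨ht, le_rfl⟩)

theorem cos_add_arctan (θ B : ℝ) : cos (θ + arctan B) = (cos θ - B * sin θ) / √(1 + B ^ 2) := by
  rw [cos_add, cos_arctan, sin_arctan]
  field_simp

theorem cos_sub_mul_sin_eq_zero_iff {θ : ℝ} (hθ : 0 < θ) (B : ℝ) :
    cos θ - B * sin θ = 0 ↔ ∃ l : ℕ, θ = π / 2 - arctan B + l * π := by
  have hD : √(1 + B ^ 2) ≠ 0 := (sqrt_pos.2 (by positivity)).ne'
  rw [← div_eq_zero_iff.trans (or_iff_left hD), ← cos_add_arctan, cos_eq_zero_iff]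
  constructor
  · rintro ⟨k, hk⟩
    have hk0 : 0 ≤ k := by
      by_contra! hneg
      have hk1 : (k : ℝ) ≤ -1 := by exact_mod_cast Int.le_sub_one_of_lt hneg
      nlinarith [neg_pi_div_two_lt_arctan B, pi_pos]
    refine ⟨k.toNat, ?_⟩
    rw [show ((k.toNat : ℕ) : ℝ) = k by exact_mod_cast Int.toNat_of_nonneg hk0]
    linarith
  · rintro ⟨l, hl⟩
    exact ⟨l, by push_cast; linarith⟩

theorem stmt16_general (c α lam : ℝ)
    (hs : (lam + α) ^ 2 - 4 * c < 0)
    (x x' : ℝ → ℝ) (hx : MemSol (fun t => c * Real.exp (α * t)) lam x x') :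
    ∀ t > (0:ℝ),
      (x t = 0 ↔ ∃ l : ℕ,
        t = (2 / Real.sqrt (-((lam + α) ^ 2 - 4 * c))) *
          ((Real.pi / 2 - Real.arctan ((lam + α) / Real.sqrt (-((lam + α) ^ 2 - 4 * c))))
            + l * Real.pi)) := by
  intro t ht
  obtain ⟨β, μ, ω, hω, rfl, rfl, rfl⟩ :
      ∃ β μ ω : ℝ, 0 < ω ∧ lam = β + μ ∧ α = μ - β ∧ c = μ ^ 2 + ω ^ 2 :=
    ⟨(lam - α) / 2, (lam + α) / 2, √(c - ((lam + α) / 2) ^ 2), sqrt_pos.2 (by nlinarith),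
      by ring, by ring, by rw [sq_sqrt (by nlinarith)]; ring⟩
  have hr : √(-((β + μ + (μ - β)) ^ 2 - 4 * (μ ^ 2 + ω ^ 2))) = 2 * ω := by
    rw [show -((β + μ + (μ - β)) ^ 2 - 4 * (μ ^ 2 + ω ^ 2)) = (2 * ω) ^ 2 by ring,
      sqrt_sq (by positivity)]
  rw [hx.eq_dampedPair_fst hω.ne' ht.le, hr, show (β + μ + (μ - β)) / (2 * ω) = μ / ω by
      field_simp; ring, show 2 / (2 * ω) = ω⁻¹ by field_simp]
  simp only [dampedPair, expCosSin, one_mul, neg_mul, ← sub_eq_add_neg, mul_eq_zero,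
    exp_ne_zero, false_or]
  rw [cos_sub_mul_sin_eq_zero_iff (mul_pos hω ht)]
  exact exists_congr fun l => (eq_inv_mul_iff_mul_eq₀ hω.ne').symm

/-- In the negative-discriminant case, the zeros of the solution in `(0,∞)` are exactly
`(2/√(−s))·(arccot((λ+α)/√(−s)) + lπ)`, `l ∈ ℕ`, where `arccot y = π/2 − arctan y`. -/
theorem stmt16 (c α lam : ℝ) (hc : 0 < c)
    (hs : (lam + α) ^ 2 - 4 * c < 0)
    (x x' : ℝ → ℝ) (hx : MemSol (fun t => c * Real.exp (α * t)) lam x x') :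
    ∀ t > (0:ℝ),
      (x t = 0 ↔ ∃ l : ℕ,
        t = (2 / Real.sqrt (-((lam + α) ^ 2 - 4 * c))) *
          ((Real.pi / 2 - Real.arctan ((lam + α) / Real.sqrt (-((lam + α) ^ 2 - 4 * c))))
            + l * Real.pi)) :=
  stmt16_general c α lam hs x x' hx

end
end
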